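/- arXiv:1303.7217 — 5 statements merged into one kernel-verified Lean document; each statement's English description precedes it below -/
import Mathlib

section
/- If θ < π/3 and w is a point such that the angle ∠(v,u,w) between vectors (v−u) and (w−u) is at most θ, and ‖u−w‖ ≤ ‖u−v‖, then ‖w−v‖ ≤ ‖u−v‖ − (1 − 2·sin(θ/2))·‖u−w‖. -/
/-! Rescale `v - u` to a vector `z` of the same length as `w - u`. Then `w - v` is the chord from
`z` to `w - u`, of length `2 ‖u - w‖ sin (α / 2) ≤ 2 ‖u - w‖ sin (θ / 2)` where `α` is the angle
at `u`, plus the radial segment from `z` to `v - u`, of length `‖u - v‖ - ‖u - w‖`. -/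

open Real InnerProductGeometry

namespace InnerProductGeometry

variable {V : Type*} [NormedAddCommGroup V] [InnerProductSpace ℝ V]

theorem norm_sub_eq_two_mul_norm_mul_sin_half_angle {x y : V} (h : ‖x‖ = ‖y‖) :
    ‖x - y‖ = 2 * ‖x‖ * sin (angle x y / 2) := by
  have hsin : 0 ≤ sin (angle x y / 2) :=
    sin_nonneg_of_nonneg_of_le_pi (by linarith [angle_nonneg x y])
      (by linarith [angle_le_pi x y, pi_pos])
  refine (sq_eq_sq₀ (norm_nonneg _) (by positivity)).1 ?_
  rw [sq, norm_sub_sq_eq_norm_sq_add_norm_sq_sub_two_mul_norm_mul_norm_mul_cos_angle, ← h,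
    mul_pow, sin_sq_eq_half_sub, mul_div_cancel₀ _ two_ne_zero]
  ring

theorem norm_sub_le_of_angle_le {x y : V} {θ : ℝ} (hθ : θ ≤ π) (hang : angle x y ≤ θ)
    (hle : ‖y‖ ≤ ‖x‖) : ‖x - y‖ ≤ ‖x‖ - (1 - 2 * sin (θ / 2)) * ‖y‖ := by
  rcases eq_or_ne y 0 with rfl | hy
  · simp
  have hx : 0 < ‖x‖ := (norm_pos_iff.2 hy).trans_le hle
  set z := (‖y‖ / ‖x‖) • x
  have hz : ‖z‖ = ‖y‖ := by
    rw [norm_smul, norm_div, norm_norm, norm_norm, div_mul_cancel₀ _ hx.ne']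
  have hxz : ‖x - z‖ = ‖x‖ - ‖y‖ := by
    rw [(SameRay.sameRay_nonneg_smul_right x (by positivity)).norm_sub, hz,
      abs_of_nonneg (sub_nonneg.2 hle)]
  have hzy : ‖z - y‖ = 2 * ‖y‖ * sin (angle x y / 2) := by
    rw [norm_sub_eq_two_mul_norm_mul_sin_half_angle hz, hz,
      angle_smul_left_of_pos _ _ (by positivity)]
  have hsin : sin (angle x y / 2) ≤ sin (θ / 2) :=
    sin_le_sin_of_le_of_le_pi_div_two (by linarith [angle_nonneg x y, pi_pos]) (by linarith)
      (by linarith)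
  calc ‖x - y‖ ≤ ‖x - z‖ + ‖z - y‖ := norm_sub_le_norm_sub_add_norm_sub x z y
    _ ≤ ‖x‖ - ‖y‖ + 2 * ‖y‖ * sin (θ / 2) := by rw [hxz, hzy]; gcongr
    _ = ‖x‖ - (1 - 2 * sin (θ / 2)) * ‖y‖ := by ring

end InnerProductGeometry

/-- If θ < π/3 and w is a point such that the angle ∠(v,u,w) between
vectors (v−u) and (w−u) is at most θ, and ‖u−w‖ ≤ ‖u−v‖, then
‖w−v‖ ≤ ‖u−v‖ − (1 − 2·sin(θ/2))·‖u−w‖. Points in ℝ^d with Euclidean norm. -/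
theorem stmt0 (d : ℕ) (u v w : EuclideanSpace ℝ (Fin d)) (θ : ℝ)
    (hθ : θ < Real.pi / 3)
    (hang : EuclideanGeometry.angle v u w ≤ θ)
    (hle : ‖u - w‖ ≤ ‖u - v‖) :
    ‖w - v‖ ≤ ‖u - v‖ - (1 - 2 * Real.sin (θ / 2)) * ‖u - w‖ := by
  rw [norm_sub_rev u v, norm_sub_rev u w] at hle ⊢
  have key := norm_sub_le_of_angle_le (x := v - u) (y := w - u) (by linarith [pi_pos]) hang hle
  rwa [sub_sub_sub_cancel_right, norm_sub_rev] at key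
end

section
/- There exists a set of n points V in the plane such that the Yao graph Y(V,F) (for any fixed frame F with small angular span) has total edge weight Θ(n)·ω(EMST(V)), where ω(EMST(V)) is the weight of the Euclidean minimum spanning tree of V. -/
abbrev Pt2 := EuclideanSpace ℝ (Fin 2)

def cone2 (B : Fin 2 → Pt2) : Set Pt2 :=
  {x | ∃ lam : Fin 2 → ℝ, (∀ i, 0 ≤ lam i) ∧ x = ∑ i, lam i • B i}

def coneAt2 (u : Pt2) (B : Fin 2 → Pt2) : Set Pt2 := {y | y - u ∈ cone2 B}

def yaoEdge2 (V : Finset Pt2) (F : Finset (Fin 2 → Pt2)) (u v : Pt2) : Prop :=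
  u ∈ V ∧ v ∈ V ∧ v ≠ u ∧ ∃ B ∈ F, v ∈ coneAt2 u B ∧
    ∀ w ∈ V, w ≠ u → w ∈ coneAt2 u B → ‖v - u‖ ≤ ‖w - u‖

-- Total weight of the Yao graph `Y(V,F)`.
open Classical in
noncomputable def yaoWeight (V : Finset Pt2) (F : Finset (Fin 2 → Pt2)) : ℝ :=
  ∑ e ∈ (V ×ˢ V).filter (fun e => yaoEdge2 V F e.1 e.2), ‖e.1 - e.2‖

def IsEdgePath2 (E : Pt2 → Pt2 → Prop) (u v : Pt2) (p : List Pt2) : Prop :=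
  p.Chain' (fun a b => E a b ∨ E b a) ∧ p.head? = some u ∧ p.getLast? = some v

/-- Weight of a Euclidean minimum spanning tree of `V` (infimum of total lengths of
finite edge sets on `V` connecting every pair of points of `V`). -/
noncomputable def mstWeight (V : Finset Pt2) : ℝ :=
  sInf {w : ℝ | ∃ E : Finset (Pt2 × Pt2),
    (∀ e ∈ E, e.1 ∈ V ∧ e.2 ∈ V) ∧
    (∀ u ∈ V, ∀ v ∈ V, ∃ p : List Pt2, IsEdgePath2 (fun a b => (a, b) ∈ E) u v p) ∧
    w = ∑ e ∈ E, ‖e.1 - e.2‖}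

/-! Put `k` points at spacing `1 / (2k)` along a horizontal segment of length `1/2` and an apex
at height `1` above its left end. The segment path plus one unit rung connects all `k + 1`
points with weight below `3/2`, so `ω(EMST) = O(1)`. Seen from a base point, every other base
point lies horizontally, at angle more than `π/3` from the apex, while every frame cone has
angular span below `π/3`; hence the cone containing the apex holds no other point, every base
point has a Yao edge of length at least `1` to the apex, and `ω(Y) ≥ k`. -/
open Real InnerProductGeometry Finset
open scoped RealInnerProductSpace

section Cone

variable {E : Type*} [NormedAddCommGroup E] [InnerProductSpace ℝ E]

lemma cos_mul_norm_mul_norm_le_inner_of_angle_le {x y : E} {φ : ℝ} (hφ : φ ≤ π)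
    (h : angle x y ≤ φ) : cos φ * (‖x‖ * ‖y‖) ≤ ⟪x, y⟫ := by
  rw [← cos_angle_mul_norm_mul_norm]
  gcongr
  exact cos_le_cos_of_nonneg_of_le_pi (angle_nonneg x y) hφ h

lemma cos_mul_norm_mul_norm_le_inner_of_nonneg_combination {ι : Type*} [Fintype ι] {B : ι → E}
    {φ : ℝ} (hφ₀ : 0 ≤ φ) (hφ : φ ≤ π / 2) (hB : ∀ i j, angle (B i) (B j) ≤ φ) {a b : ι → ℝ}
    (ha : ∀ i, 0 ≤ a i) (hb : ∀ i, 0 ≤ b i) :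
    cos φ * (‖∑ i, a i • B i‖ * ‖∑ j, b j • B j‖) ≤ ⟪∑ i, a i • B i, ∑ j, b j • B j⟫ := by
  have hcos : 0 ≤ cos φ := cos_nonneg_of_mem_Icc ⟨by linarith [pi_pos], hφ⟩
  have hnorm : ∀ c : ι → ℝ, (∀ i, 0 ≤ c i) → ‖∑ i, c i • B i‖ ≤ ∑ i, c i * ‖B i‖ :=
    fun c hc => (norm_sum_le _ _).trans_eq <| by simp [norm_smul, abs_of_nonneg (hc _)]
  calc cos φ * (‖∑ i, a i • B i‖ * ‖∑ j, b j • B j‖)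
      ≤ cos φ * ((∑ i, a i * ‖B i‖) * ∑ j, b j * ‖B j‖) := by
        gcongr
        exacts [sum_nonneg fun i _ => by have := ha i; positivity, hnorm a ha, hnorm b hb]
    _ = ∑ i, ∑ j, a i * b j * (cos φ * (‖B i‖ * ‖B j‖)) := by
        rw [sum_mul_sum, mul_sum]
        refine sum_congr rfl fun i _ => ?_
        rw [mul_sum]
        exact sum_congr rfl fun j _ => by ring
    _ ≤ ∑ i, ∑ j, a i * b j * ⟪B i, B j⟫ := by
        gcongr with i _ j _
        · exact mul_nonneg (ha i) (hb j)
        · exact cos_mul_norm_mul_norm_le_inner_of_angle_le (by linarith [pi_pos]) (hB i j)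
    _ = ⟪∑ i, a i • B i, ∑ j, b j • B j⟫ := by
        simp only [sum_inner, inner_sum, real_inner_smul_left, real_inner_smul_right]
        rw [sum_comm]
        exact sum_congr rfl fun i _ => sum_congr rfl fun j _ => by ring

end Cone

lemma cos_mul_norm_mul_norm_le_inner_of_mem_cone2 {B : Fin 2 → Pt2} {φ : ℝ} (hφ₀ : 0 ≤ φ)
    (hφ : φ ≤ π / 2) (hB : ∀ i j, angle (B i) (B j) ≤ φ) {x y : Pt2} (hx : x ∈ cone2 B)
    (hy : y ∈ cone2 B) : cos φ * (‖x‖ * ‖y‖) ≤ ⟪x, y⟫ := by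
  obtain ⟨a, ha, rfl⟩ := hx
  obtain ⟨b, hb, rfl⟩ := hy
  exact cos_mul_norm_mul_norm_le_inner_of_nonneg_combination hφ₀ hφ hB ha hb

/-- `hsep` says every other point of `V` is seen from `u` at angle more than `φ` from `v`, so
it cannot share a frame cone with `v`. -/
lemma yaoEdge2_of_inner_lt {V : Finset Pt2} {F : Finset (Fin 2 → Pt2)} {φ : ℝ} (hφ₀ : 0 ≤ φ)
    (hφ : φ ≤ π / 2) (hcover : ∀ x : Pt2, x ≠ 0 → ∃ B ∈ F, x ∈ cone2 B)
    (hang : ∀ B ∈ F, ∀ i j, angle (B i) (B j) ≤ φ) {u v : Pt2} (hu : u ∈ V) (hv : v ∈ V)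
    (hvu : v ≠ u)
    (hsep : ∀ w ∈ V, w ≠ u → w ≠ v → ⟪v - u, w - u⟫ < cos φ * (‖v - u‖ * ‖w - u‖)) :
    yaoEdge2 V F u v := by
  obtain ⟨B, hBF, hvB⟩ := hcover (v - u) (sub_ne_zero.mpr hvu)
  refine ⟨hu, hv, hvu, B, hBF, hvB, fun w hw hwu hwB => ?_⟩
  by_cases hwv : w = v
  · rw [hwv]
  · exact absurd (cos_mul_norm_mul_norm_le_inner_of_mem_cone2 hφ₀ hφ (hang B hBF) hvB hwB)
      (hsep w hw hwu hwv).not_ge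

lemma sum_le_yaoWeight {V : Finset Pt2} {F : Finset (Fin 2 → Pt2)} {S : Finset (Pt2 × Pt2)}
    (hS : ∀ e ∈ S, yaoEdge2 V F e.1 e.2) : ∑ e ∈ S, ‖e.1 - e.2‖ ≤ yaoWeight V F := by
  classical
  refine sum_le_sum_of_subset_of_nonneg (fun e he => ?_) fun _ _ _ => norm_nonneg _
  have h := hS e he
  exact mem_filter.mpr ⟨mem_product.mpr ⟨h.1, h.2.1⟩, h⟩

lemma exists_isEdgePath2_of_reflTransGen {E : Pt2 → Pt2 → Prop} {u v : Pt2}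
    (h : Relation.ReflTransGen (Relation.SymmGen E) u v) : ∃ p, IsEdgePath2 E u v p := by
  obtain ⟨l, hl, hlast⟩ := List.exists_isChain_cons_of_relationReflTransGen h
  exact ⟨u :: l, hl, rfl, by rw [List.getLast?_eq_some_getLast (List.cons_ne_nil _ _), hlast]⟩

lemma mstWeight_le {V : Finset Pt2} {E : Finset (Pt2 × Pt2)} (hE : ∀ e ∈ E, e.1 ∈ V ∧ e.2 ∈ V)
    (hconn : ∀ u ∈ V, ∀ v ∈ V,
      Relation.ReflTransGen (Relation.SymmGen fun a b => (a, b) ∈ E) u v) :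
    mstWeight V ≤ ∑ e ∈ E, ‖e.1 - e.2‖ := by
  refine csInf_le ⟨0, ?_⟩
    ⟨E, hE, fun u hu v hv => exists_isEdgePath2_of_reflTransGen (hconn u hu v hv), rfl⟩
  rintro w ⟨E', -, -, rfl⟩
  exact sum_nonneg fun _ _ => norm_nonneg _

namespace Fan

noncomputable def apex : Pt2 := !₂[0, 1]

noncomputable def base (k i : ℕ) : Pt2 := !₂[i / (2 * k), 0]

noncomputable def points (k : ℕ) : Finset Pt2 := insert apex ((range k).image (base k))

lemma base_injOn (k : ℕ) : Set.InjOn (base k) (range k) := by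
  intro i hi j _ hij
  have hk : (0 : ℝ) < 2 * k := by
    have : (0 : ℝ) < k := by exact_mod_cast (Nat.zero_le i).trans_lt (mem_range.mp hi)
    positivity
  have h := congrArg (fun p : Pt2 => p 0) hij
  simp only [base, PiLp.toLp_apply, Matrix.cons_val_zero] at h
  exact_mod_cast (div_left_inj' hk.ne').mp h

lemma apex_ne_base (k i : ℕ) : apex ≠ base k i := fun h => by
  simpa [apex, base] using congrArg (fun p : Pt2 => p 1) h

lemma card_points (k : ℕ) : (points k).card = k + 1 := by
  rw [points, card_insert_of_notMem, card_image_of_injOn (base_injOn k), card_range]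
  simpa using fun i _ => (apex_ne_base k i).symm

lemma norm_apex_sub_base_zero (k : ℕ) : ‖apex - base k 0‖ = 1 := by
  simp [apex, base, EuclideanSpace.norm_eq, Fin.sum_univ_two]

lemma one_le_norm_apex_sub_base (k i : ℕ) : 1 ≤ ‖apex - base k i‖ := by
  simpa [apex, base, EuclideanSpace.norm_eq, Fin.sum_univ_two] using sq_nonneg _

lemma norm_base_sub_base_succ (k i : ℕ) : ‖base k i - base k (i + 1)‖ = 1 / (2 * k) := by
  simp only [base, EuclideanSpace.norm_eq, Fin.sum_univ_two, PiLp.sub_apply,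
    Matrix.cons_val_zero, Matrix.cons_val_one, Matrix.cons_val_fin_one, Real.norm_eq_abs, sq_abs]
  rw [show (i : ℝ) / (2 * k) - ((i + 1 : ℕ) : ℝ) / (2 * k) = -(1 / (2 * k)) by push_cast; ring]
  rw [sub_zero, neg_sq, zero_pow two_ne_zero, add_zero, Real.sqrt_sq (by positivity)]

lemma inner_apex_sub_base_lt {k i j : ℕ} (hi : i < k) (hji : j ≠ i) :
    ⟪apex - base k i, base k j - base k i⟫ <
      1 / 2 * (‖apex - base k i‖ * ‖base k j - base k i‖) := by
  have hk : (0 : ℝ) < 2 * k := by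
    have : (0 : ℝ) < k := by exact_mod_cast (Nat.zero_le i).trans_lt hi
    positivity
  have hx₀ : 0 ≤ (i : ℝ) / (2 * k) := by positivity
  have hx : (i : ℝ) / (2 * k) < 1 / 2 := by
    rw [div_lt_iff₀ hk]
    have : (i : ℝ) + 1 ≤ k := by exact_mod_cast hi
    linarith
  have hyx : (j : ℝ) / (2 * k) - i / (2 * k) ≠ 0 := by
    rw [sub_ne_zero, Ne, div_left_inj' hk.ne']
    exact_mod_cast hji
  have hinner : ⟪apex - base k i, base k j - base k i⟫ =
      -(((j : ℝ) / (2 * k) - i / (2 * k)) * (i / (2 * k))) := by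
    simp [apex, base, PiLp.inner_apply, Fin.sum_univ_two]
  have hnorm_apex : ‖apex - base k i‖ = √(((i : ℝ) / (2 * k)) ^ 2 + 1) := by
    simp [apex, base, EuclideanSpace.norm_eq, Fin.sum_univ_two]
  have hnorm_base : ‖base k j - base k i‖ = |(j : ℝ) / (2 * k) - i / (2 * k)| := by
    simp [base, EuclideanSpace.norm_eq, Fin.sum_univ_two, Real.sqrt_sq_eq_abs]
  rw [hinner, hnorm_apex, hnorm_base]
  generalize (i : ℝ) / (2 * k) = x at *
  generalize (j : ℝ) / (2 * k) - x = d at *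
  have hx_norm : 1 ≤ √(x ^ 2 + 1) := Real.one_le_sqrt.mpr (by nlinarith)
  have hd : 0 < |d| := abs_pos.mpr hyx
  calc -(d * x) ≤ |d| * x := by nlinarith [neg_abs_le d]
    _ < 1 / 2 * |d| := by nlinarith
    _ ≤ 1 / 2 * (√(x ^ 2 + 1) * |d|) := by nlinarith

lemma mem_points {k : ℕ} {u : Pt2} : u ∈ points k ↔ u = apex ∨ ∃ i < k, base k i = u := by
  simp [points]

lemma apex_mem_points (k : ℕ) : apex ∈ points k := mem_insert_self _ _

lemma base_mem_points {k i : ℕ} (hi : i < k) : base k i ∈ points k :=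
  mem_points.mpr (Or.inr ⟨i, hi, rfl⟩)

lemma yaoEdge2_base_apex {k i : ℕ} {F : Finset (Fin 2 → Pt2)} {φ : ℝ} (hφ₀ : 0 ≤ φ)
    (hφ : φ < π / 3) (hcover : ∀ x : Pt2, x ≠ 0 → ∃ B ∈ F, x ∈ cone2 B)
    (hang : ∀ B ∈ F, ∀ i j, angle (B i) (B j) ≤ φ) (hi : i < k) :
    yaoEdge2 (points k) F (base k i) apex := by
  have hcos : 1 / 2 < cos φ := by
    rw [← cos_pi_div_three]
    exact cos_lt_cos_of_nonneg_of_le_pi hφ₀ (by linarith [pi_pos]) hφ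
  refine yaoEdge2_of_inner_lt hφ₀ (by linarith [pi_pos]) hcover hang (base_mem_points hi)
    (apex_mem_points k) (apex_ne_base k i) fun w hw hwb hwa => ?_
  obtain rfl | ⟨j, -, rfl⟩ := mem_points.mp hw
  · exact absurd rfl hwa
  · have hji : j ≠ i := fun h => hwb (h ▸ rfl)
    calc _ < 1 / 2 * (‖apex - base k i‖ * ‖base k j - base k i‖) := inner_apex_sub_base_lt hi hji
      _ ≤ cos φ * (‖apex - base k i‖ * ‖base k j - base k i‖) := by gcongr

lemma le_yaoWeight_points {k : ℕ} {F : Finset (Fin 2 → Pt2)}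
    (hyao : ∀ i < k, yaoEdge2 (points k) F (base k i) apex) : (k : ℝ) ≤ yaoWeight (points k) F :=
  calc (k : ℝ) = ∑ _i ∈ range k, (1 : ℝ) := by simp
    _ ≤ ∑ i ∈ range k, ‖base k i - apex‖ := sum_le_sum fun i _ => by
        rw [norm_sub_rev]
        exact one_le_norm_apex_sub_base k i
    _ = ∑ e ∈ (range k).image (fun i => (base k i, apex)), ‖e.1 - e.2‖ := by
        rw [sum_image fun i hi j hj h => base_injOn k hi hj (congrArg Prod.fst h)]
    _ ≤ yaoWeight (points k) F :=
        sum_le_yaoWeight <| forall_mem_image.mpr fun i hi => hyao i (mem_range.mp hi)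

noncomputable def pathEdges (k : ℕ) : Finset (Pt2 × Pt2) :=
  insert (apex, base k 0) ((range (k - 1)).image fun i => (base k i, base k (i + 1)))

lemma reflTransGen_apex_base {k i : ℕ} (hi : i < k) :
    Relation.ReflTransGen (Relation.SymmGen fun a b => (a, b) ∈ pathEdges k) apex (base k i) := by
  induction i with
  | zero => exact .single (.of_rel (mem_insert_self _ _))
  | succ i ih =>
    exact (ih (by omega)).tail
      (.of_rel (mem_insert_of_mem (mem_image.mpr ⟨i, mem_range.mpr (by omega), rfl⟩)))

lemma mstWeight_points_le {k : ℕ} (hk : k ≠ 0) : mstWeight (points k) ≤ 3 / 2 := by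
  have hends : ∀ e ∈ pathEdges k, e.1 ∈ points k ∧ e.2 ∈ points k := by
    intro e he
    obtain rfl | he := mem_insert.mp he
    · exact ⟨apex_mem_points k, base_mem_points (Nat.pos_of_ne_zero hk)⟩
    · obtain ⟨i, hi, rfl⟩ := mem_image.mp he
      have hi := mem_range.mp hi
      exact ⟨base_mem_points (by omega), base_mem_points (by omega)⟩
  have hroot : ∀ u ∈ points k,
      Relation.ReflTransGen (Relation.SymmGen fun a b => (a, b) ∈ pathEdges k) apex u := by
    intro u hu
    obtain rfl | ⟨i, hi, rfl⟩ := mem_points.mp hu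
    exacts [.refl, reflTransGen_apex_base hi]
  have hnotMem : (apex, base k 0) ∉ (range (k - 1)).image fun i => (base k i, base k (i + 1)) := by
    simp only [mem_image, not_exists, not_and]
    exact fun i _ h => apex_ne_base k i (congrArg Prod.fst h).symm
  calc mstWeight (points k) ≤ ∑ e ∈ pathEdges k, ‖e.1 - e.2‖ :=
        mstWeight_le hends fun u hu v hv => (symm_of _ (hroot u hu)).trans (hroot v hv)
    _ ≤ 1 + ∑ i ∈ range (k - 1), ‖base k i - base k (i + 1)‖ := by
        rw [pathEdges, sum_insert hnotMem, norm_apex_sub_base_zero]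
        gcongr
        exact sum_image_le_of_nonneg fun _ _ => norm_nonneg _
    _ = 1 + (k - 1 : ℕ) / (2 * k) := by simp [norm_base_sub_base_succ, div_eq_mul_inv]
    _ ≤ 3 / 2 := by
        have hsub : ((k - 1 : ℕ) : ℝ) ≤ k := by exact_mod_cast Nat.sub_le k 1
        have : ((k - 1 : ℕ) : ℝ) / (2 * k) ≤ 1 / 2 := by
          rw [div_le_iff₀ (by positivity)]
          linarith
        linarith

end Fan

/-- there are n-point planar sets whose Yao graph (for any frame of small
angular span covering the plane) has total edge weight Θ(n)·ω(EMST). -/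
theorem stmt3 :
    ∃ c : ℝ, 0 < c ∧ ∀ φ : ℝ, 0 < φ → φ < Real.pi / 3 → ∀ n₀ : ℕ, ∃ n ≥ n₀,
      ∃ V : Finset Pt2, V.card = n ∧
        ∀ F : Finset (Fin 2 → Pt2),
          (∀ x : Pt2, x ≠ 0 → ∃ B ∈ F, x ∈ cone2 B) →
          (∀ B ∈ F, ∀ i j, InnerProductGeometry.angle (B i) (B j) ≤ φ) →
          c * n * mstWeight V ≤ yaoWeight V F := by
  refine ⟨1 / 3, by norm_num, fun φ hφ₀ hφ n₀ => ?_⟩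
  obtain ⟨k, hn₀k, hk⟩ : ∃ k : ℕ, n₀ ≤ k ∧ 1 ≤ k := ⟨max n₀ 1, le_max_left _ _, le_max_right _ _⟩
  refine ⟨k + 1, by omega, Fan.points k, Fan.card_points k, fun F hcover hang => ?_⟩
  have hmst : mstWeight (Fan.points k) ≤ 3 / 2 := Fan.mstWeight_points_le (by omega)
  have hyao : (k : ℝ) ≤ yaoWeight (Fan.points k) F :=
    Fan.le_yaoWeight_points fun i hi => Fan.yaoEdge2_base_apex hφ₀.le hφ hcover hang hi
  have hk' : (1 : ℝ) ≤ k := by exact_mod_cast hk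
  calc 1 / 3 * ((k + 1 : ℕ) : ℝ) * mstWeight (Fan.points k) ≤ 1 / 3 * (k + 1) * (3 / 2) := by
        push_cast
        gcongr
    _ ≤ k := by linarith
    _ ≤ yaoWeight (Fan.points k) F := hyao
end

section
/- Let t > 1 and θ, ρ₁ satisfy θ < π/3, 1 − 2sin(θ/2) − 2√d/ρ₁ > 0, and (2t√d)/ρ₁ + (1 + 2t√d/ρ₁)(1 + √d/ρ₁)/(1 − 2sin(θ/2) − 2√d/ρ₁) ≤ t. Suppose v, w₁, w₂, ..., w_{2k} are points with, for each i: the angle ∠(v, w_{2i−1}, w_{2i}) ≤ θ; ‖v−w_{2i−1}‖ − ‖v−w_{2i}‖ ≥ (1−2sin(θ/2))‖w_{2i−1}−w_{2i}‖; and ‖v−w_{2i}‖ − ‖v−w_{2i+1}‖ ≥ −(√d/ρ₁)·max(‖w_{2i−1}−w_{2i}‖, ‖w_{2i+1}−w_{2i+2}‖). Then Σ_{i=1}^{k} ‖w_{2i−1}−w_{2i}‖ ≤ (‖v−w₁‖)/(1 − 2sin(θ/2) − 2√d/ρ₁). -/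
/-!
Each edge `w (2i-1) w (2i)` of length `Lᵢ` brings the walk at least `c * Lᵢ` closer to `v`, where
`c = 1 - 2 sin (θ/2)`, while passing from one edge to the next moves it away from `v` by at most
`ε * (Lᵢ + Lᵢ₊₁)` with `ε = √d / ρ₁`. Summing, the distances telescope and every length is charged
to at most two jumps, so `(c - 2ε) * ∑ Lᵢ ≤ ‖v - w 1‖`.
-/

open Finset

section Telescoping

variable {c ε : ℝ} {L a b : ℕ → ℝ}

/-- The term `ε * L n` on the left prepays the share of `L n` in the next jump. -/
theorem telescoping_invariant {n : ℕ} (hn : 1 ≤ n) (hε : 0 ≤ ε) (hL : ∀ i, 0 ≤ L i)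
    (hdec : ∀ i ∈ Icc 1 n, c * L i ≤ a i - b i)
    (hjump : ∀ i ∈ Icc 1 (n - 1), a (i + 1) - b i ≤ ε * (L i + L (i + 1))) :
    c * ∑ i ∈ Icc 1 n, L i + b n + ε * L n ≤ a 1 + 2 * ε * ∑ i ∈ Icc 1 n, L i := by
  induction n, hn using Nat.le_induction with
  | base =>
    have h₁ := hdec 1 (by simp)
    simp only [Icc_self, sum_singleton]
    linarith [mul_nonneg hε (hL 1)]
  | succ n hn ih =>
    have hstep := hdec (n + 1) (by simp)
    have hnext := hjump n (by simp; omega)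
    have ih := ih (fun i hi => hdec i (Icc_subset_Icc_right (by omega) hi))
      (fun i hi => hjump i (Icc_subset_Icc_right (by omega) hi))
    rw [sum_Icc_succ_top (by omega)]
    linarith

theorem sum_Icc_le_of_telescoping {n : ℕ} (hn : 1 ≤ n) (hε : 0 ≤ ε) (hL : ∀ i, 0 ≤ L i)
    (hb : ∀ i, 0 ≤ b i) (hdec : ∀ i ∈ Icc 1 n, c * L i ≤ a i - b i)
    (hjump : ∀ i ∈ Icc 1 (n - 1), a (i + 1) - b i ≤ ε * (L i + L (i + 1))) :
    (c - 2 * ε) * ∑ i ∈ Icc 1 n, L i ≤ a 1 := by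
  have := telescoping_invariant hn hε hL hdec hjump
  linarith [hb n, mul_nonneg hε (hL n)]

end Telescoping

theorem stmt9_general (d k : ℕ) (hk : 1 ≤ k) (θ ρ₁ : ℝ)
    (hρ₁ : 0 < ρ₁)
    (hden : 0 < 1 - 2 * Real.sin (θ / 2) - 2 * Real.sqrt d / ρ₁)
    (v : EuclideanSpace ℝ (Fin d)) (w : ℕ → EuclideanSpace ℝ (Fin d))
    (hdec : ∀ i ∈ Finset.Icc 1 k,
      (1 - 2 * Real.sin (θ / 2)) * ‖w (2 * i - 1) - w (2 * i)‖ ≤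
        ‖v - w (2 * i - 1)‖ - ‖v - w (2 * i)‖)
    (hjump : ∀ i ∈ Finset.Icc 1 (k - 1),
      -(Real.sqrt d / ρ₁) *
          max ‖w (2 * i - 1) - w (2 * i)‖ ‖w (2 * i + 1) - w (2 * i + 2)‖ ≤
        ‖v - w (2 * i)‖ - ‖v - w (2 * i + 1)‖) :
    ∑ i ∈ Finset.Icc 1 k, ‖w (2 * i - 1) - w (2 * i)‖ ≤
      ‖v - w 1‖ / (1 - 2 * Real.sin (θ / 2) - 2 * Real.sqrt d / ρ₁) := by
  rw [mul_div_assoc] at hden ⊢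
  set ε := Real.sqrt d / ρ₁
  have hε : 0 ≤ ε := by positivity
  have hjump' : ∀ i ∈ Icc 1 (k - 1),
      ‖v - w (2 * (i + 1) - 1)‖ - ‖v - w (2 * i)‖ ≤
        ε * (‖w (2 * i - 1) - w (2 * i)‖ + ‖w (2 * (i + 1) - 1) - w (2 * (i + 1))‖) := by
    intro i hi
    rw [show 2 * (i + 1) - 1 = 2 * i + 1 by omega, show 2 * (i + 1) = 2 * i + 2 by ring]
    have hmax := mul_le_mul_of_nonneg_left
      (max_le_add_of_nonneg (norm_nonneg (w (2 * i - 1) - w (2 * i)))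
        (norm_nonneg (w (2 * i + 1) - w (2 * i + 2)))) hε
    linarith [hjump i hi]
  have key := sum_Icc_le_of_telescoping (b := fun i => ‖v - w (2 * i)‖) hk hε
    (fun _ => norm_nonneg _) (fun _ => norm_nonneg _) hdec hjump'
  rw [le_div_iff₀ hden, mul_comm]
  simpa using key

/-- the telescoping bound on the total length of a chain of near-parallel
crossing edges w₁w₂, w₃w₄, …, w_{2k−1}w_{2k} aimed at the target v. -/
theorem stmt9 (d k : ℕ) (hd : 0 < d) (hk : 1 ≤ k) (t θ ρ₁ : ℝ)
    (ht : 1 < t) (hρ₁ : 0 < ρ₁) (hθ : θ < Real.pi / 3)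
    (hden : 0 < 1 - 2 * Real.sin (θ / 2) - 2 * Real.sqrt d / ρ₁)
    (hbig : 2 * t * Real.sqrt d / ρ₁ +
        (1 + 2 * t * Real.sqrt d / ρ₁) * (1 + Real.sqrt d / ρ₁) /
          (1 - 2 * Real.sin (θ / 2) - 2 * Real.sqrt d / ρ₁) ≤ t)
    (v : EuclideanSpace ℝ (Fin d)) (w : ℕ → EuclideanSpace ℝ (Fin d))
    (hang : ∀ i ∈ Finset.Icc 1 k,
      EuclideanGeometry.angle v (w (2 * i - 1)) (w (2 * i)) ≤ θ)
    (hdec : ∀ i ∈ Finset.Icc 1 k,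
      (1 - 2 * Real.sin (θ / 2)) * ‖w (2 * i - 1) - w (2 * i)‖ ≤
        ‖v - w (2 * i - 1)‖ - ‖v - w (2 * i)‖)
    (hjump : ∀ i ∈ Finset.Icc 1 (k - 1),
      -(Real.sqrt d / ρ₁) *
          max ‖w (2 * i - 1) - w (2 * i)‖ ‖w (2 * i + 1) - w (2 * i + 2)‖ ≤
        ‖v - w (2 * i)‖ - ‖v - w (2 * i + 1)‖) :
    ∑ i ∈ Finset.Icc 1 k, ‖w (2 * i - 1) - w (2 * i)‖ ≤
      ‖v - w 1‖ / (1 - 2 * Real.sin (θ / 2) - 2 * Real.sqrt d / ρ₁) :=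
  stmt9_general d k hk θ ρ₁ hρ₁ hden v w hdec hjump
end

section
/- Let F be a frame with each cone of angular span at most α, and let b, b' be boxes with d(b,b') ≥ ρ₁·max(ϑ(b),ϑ(b')). Then there exists a subcollection B ⊆ F of cones such that for every point x ∈ b the union ∪_{B_i∈B} C(x,B_i) contains b', and the angular span of B is at most θ = 4√d/ρ₁ + 3α. -/
abbrev Pt (d : ℕ) := EuclideanSpace ℝ (Fin d)

/-- The axis-parallel box ∏ᵢ [L i, R i] in ℝ^d. -/
def box {d : ℕ} (L R : Fin d → ℝ) : Set (Pt d) :=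
  {x | ∀ i, L i ≤ x i ∧ x i ≤ R i}

/-- The size of the box: its longest side length. -/
noncomputable def boxSize {d : ℕ} (L R : Fin d → ℝ) : ℝ := ⨆ i, (R i - L i)

/-- The minimum Euclidean distance between two sets. -/
noncomputable def setDist {d : ℕ} (A B : Set (Pt d)) : ℝ :=
  sInf ((fun p : Pt d × Pt d => dist p.1 p.2) '' (A ×ˢ B))

/-- The cone generated by a family of vectors: all nonnegative combinations. -/
def cone {d : ℕ} (B : Fin d → Pt d) : Set (Pt d) :=
  {x | ∃ lam : Fin d → ℝ, (∀ i, 0 ≤ lam i) ∧ x = ∑ i, lam i • B i}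

/-- The cone with apex `u` generated by `B`. -/
def coneAt {d : ℕ} (u : Pt d) (B : Fin d → Pt d) : Set (Pt d) :=
  {y | y - u ∈ cone B}

/-!
For every x ∈ b, the directions y - x with y ∈ b' are nonzero, so the cones of F that contain
one of them cover b' from x. Any two such directions have length at least d(b,b') and differ by
at most √d (ϑ(b) + ϑ(b')) ≤ 2√d d(b,b')/ρ₁, so the law of cosines and Jordan's inequality
bound the angle between them by π√d/ρ₁ ≤ 4√d/ρ₁; each of the two cones containing them adds
at most α. If d(b,b') = 0, the separation forces b = b' to be a single point, and any one cone
of F will do.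
-/

open InnerProductGeometry Real

theorem InnerProductGeometry.angle_le_pi_div_two_mul_norm_sub_div {V : Type*}
    [NormedAddCommGroup V] [InnerProductSpace ℝ V] {u v : V} {m : ℝ}
    (hm : 0 < m) (hu : m ≤ ‖u‖) (hv : m ≤ ‖v‖) : angle u v ≤ π / 2 * (‖u - v‖ / m) := by
  set θ := angle u v
  have hcos : cos θ ≤ 1 - 2 / π ^ 2 * θ ^ 2 :=
    cos_le_one_sub_mul_cos_sq (abs_le.2 ⟨by linarith [angle_nonneg u v, pi_pos], angle_le_pi u v⟩)
  have hsq : (2 / π * m * θ) ^ 2 ≤ ‖u - v‖ ^ 2 :=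
    calc (2 / π * m * θ) ^ 2 = 2 * (m * m) * (2 / π ^ 2 * θ ^ 2) := by ring
      _ ≤ 2 * (‖u‖ * ‖v‖) * (1 - cos θ) := by
        gcongr
        linarith
      _ ≤ ‖u - v‖ ^ 2 := by
        rw [norm_sub_sq_real, ← cos_angle_mul_norm_mul_norm]
        nlinarith [sq_nonneg (‖u‖ - ‖v‖)]
  calc θ = π / 2 * (2 / π * m * θ / m) := by field_simp
    _ ≤ π / 2 * (‖u - v‖ / m) := by
      gcongr
      exact abs_le_of_sq_le_sq' hsq (norm_nonneg _) |>.2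

section SetDist

variable {d : ℕ} {A B : Set (Pt d)} {x y : Pt d}

theorem setDist_le_norm_sub (hx : x ∈ A) (hy : y ∈ B) : setDist A B ≤ ‖y - x‖ := by
  rw [← dist_eq_norm, dist_comm]
  exact csInf_le ⟨0, by rintro _ ⟨p, -, rfl⟩; exact dist_nonneg⟩ ⟨(x, y), ⟨hx, hy⟩, rfl⟩

theorem setDist_singleton : setDist {x} {y} = dist x y := by
  simp [setDist]

end SetDist

section Boxes

variable {d : ℕ} {L R L' R' : Fin d → ℝ} {x y : Pt d}

theorem norm_sub_le_sqrt_mul_boxSize (hx : x ∈ box L R) (hy : y ∈ box L R) :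
    ‖x - y‖ ≤ √d * boxSize L R := by
  refine ((EuclideanSpace.basisFun (Fin d) ℝ).norm_le_card_mul_iSup_norm_inner (x - y)).trans ?_
  simp only [EuclideanSpace.basisFun_inner, Fintype.card_fin, PiLp.sub_apply, Real.norm_eq_abs]
  refine mul_le_mul_of_nonneg_left (Finite.ciSup_mono fun i => ?_) (sqrt_nonneg _)
  exact abs_sub_le_iff.2 ⟨by linarith [hx i, hy i], by linarith [hx i, hy i]⟩

theorem box_subsingleton (h : boxSize L R ≤ 0) : (box L R).Subsingleton := fun x hx y hy => by
  ext i
  have := (Finite.le_ciSup_of_le (f := fun i => R i - L i) i le_rfl).trans h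
  linarith [hx i, hy i]

theorem eq_of_setDist_box_nonpos (hsize : max (boxSize L R) (boxSize L' R') ≤ 0)
    (hD : setDist (box L R) (box L' R') ≤ 0) (hx : x ∈ box L R) (hy : y ∈ box L' R') : y = x := by
  rw [(box_subsingleton ((le_max_left _ _).trans hsize)).eq_singleton_of_mem hx,
    (box_subsingleton ((le_max_right _ _).trans hsize)).eq_singleton_of_mem hy,
    setDist_singleton] at hD
  exact (dist_le_zero.1 hD).symm

theorem angle_sub_le_of_mem_box {ρ₁ : ℝ} (hρ : 0 < ρ₁)
    (hsep : ρ₁ * max (boxSize L R) (boxSize L' R') ≤ setDist (box L R) (box L' R'))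
    (hD : 0 < setDist (box L R) (box L' R')) {x₁ x₂ y₁ y₂ : Pt d}
    (hx₁ : x₁ ∈ box L R) (hx₂ : x₂ ∈ box L R) (hy₁ : y₁ ∈ box L' R') (hy₂ : y₂ ∈ box L' R') :
    angle (y₁ - x₁) (y₂ - x₂) ≤ 4 * √d / ρ₁ := by
  set M := max (boxSize L R) (boxSize L' R')
  set D := setDist (box L R) (box L' R')
  have hdiff : ‖(y₁ - x₁) - (y₂ - x₂)‖ ≤ 2 * √d * M :=
    calc ‖(y₁ - x₁) - (y₂ - x₂)‖ = ‖(y₁ - y₂) + (x₂ - x₁)‖ := by congr 1; abel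
      _ ≤ ‖y₁ - y₂‖ + ‖x₂ - x₁‖ := norm_add_le _ _
      _ ≤ √d * M + √d * M := by
        gcongr
        · exact (norm_sub_le_sqrt_mul_boxSize hy₁ hy₂).trans (by gcongr; exact le_max_right _ _)
        · exact (norm_sub_le_sqrt_mul_boxSize hx₂ hx₁).trans (by gcongr; exact le_max_left _ _)
      _ = 2 * √d * M := by ring
  have hratio : ‖(y₁ - x₁) - (y₂ - x₂)‖ / D ≤ 2 * √d / ρ₁ := by
    rw [div_le_div_iff₀ hD hρ]
    calc ‖(y₁ - x₁) - (y₂ - x₂)‖ * ρ₁ ≤ 2 * √d * (ρ₁ * M) := by nlinarith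
      _ ≤ 2 * √d * D := by gcongr
  calc angle (y₁ - x₁) (y₂ - x₂) ≤ π / 2 * (‖(y₁ - x₁) - (y₂ - x₂)‖ / D) :=
        angle_le_pi_div_two_mul_norm_sub_div hD (setDist_le_norm_sub hx₁ hy₁)
          (setDist_le_norm_sub hx₂ hy₂)
    _ ≤ π / 2 * (2 * √d / ρ₁) := by gcongr
    _ = π * √d / ρ₁ := by ring
    _ ≤ 4 * √d / ρ₁ := by gcongr; exact pi_le_four

end Boxes

section Cones

variable {d : ℕ}

theorem zero_mem_cone (B : Fin d → Pt d) : (0 : Pt d) ∈ cone B :=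
  ⟨0, fun _ => le_rfl, by simp⟩

open Classical in
noncomputable def directionCones (F : Finset (Fin d → Pt d)) (S T : Set (Pt d)) :
    Finset (Fin d → Pt d) :=
  F.filter fun B => ∃ x ∈ S, ∃ y ∈ T, y - x ∈ cone B

theorem mem_directionCones {F : Finset (Fin d → Pt d)} {S T : Set (Pt d)} {B : Fin d → Pt d} :
    B ∈ directionCones F S T ↔ B ∈ F ∧ ∃ x ∈ S, ∃ y ∈ T, y - x ∈ cone B := by
  classical
  exact Finset.mem_filter

theorem subset_biUnion_coneAt_directionCones {F : Finset (Fin d → Pt d)}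
    (hcover : ∀ x : Pt d, x ≠ 0 → ∃ B ∈ F, x ∈ cone B) {S T : Set (Pt d)} {x : Pt d}
    (hx : x ∈ S) (hT : ∀ y ∈ T, y - x ≠ 0) :
    T ⊆ ⋃ B ∈ directionCones F S T, coneAt x B := fun y hy => by
  obtain ⟨B, hBF, hB⟩ := hcover (y - x) (hT y hy)
  exact Set.mem_biUnion (mem_directionCones.2 ⟨hBF, x, hx, y, hy, hB⟩) hB

end Cones

theorem stmt17_general (d : ℕ) (hd : 0 < d) (α ρ₁ : ℝ) (hα : 0 ≤ α) (hρ : 0 < ρ₁)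
    (F : Finset (Fin d → Pt d))
    (hcover : ∀ x : Pt d, x ≠ 0 → ∃ B ∈ F, x ∈ cone B)
    (hspan : ∀ B ∈ F, ∀ v₁ ∈ cone B, ∀ v₂ ∈ cone B, v₁ ≠ 0 → v₂ ≠ 0 →
      InnerProductGeometry.angle v₁ v₂ ≤ α)
    (L R L' R' : Fin d → ℝ)
    (hsep : ρ₁ * max (boxSize L R) (boxSize L' R') ≤
      setDist (box L R) (box L' R')) :
    ∃ 𝓑 ⊆ F,
      (∀ x ∈ box L R, box L' R' ⊆ ⋃ B ∈ (𝓑 : Finset (Fin d → Pt d)), coneAt x B) ∧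
      (∀ B₁ ∈ 𝓑, ∀ B₂ ∈ 𝓑, ∀ v₁ ∈ cone B₁, ∀ v₂ ∈ cone B₂, v₁ ≠ 0 → v₂ ≠ 0 →
        InnerProductGeometry.angle v₁ v₂ ≤ 4 * Real.sqrt d / ρ₁ + 3 * α) := by
  by_cases hD : 0 < setDist (box L R) (box L' R')
  · have hdir : ∀ {x y}, x ∈ box L R → y ∈ box L' R' → y - x ≠ 0 := fun hx hy =>
      norm_pos_iff.1 (hD.trans_le (setDist_le_norm_sub hx hy))
    refine ⟨directionCones F (box L R) (box L' R'), fun B hB => (mem_directionCones.1 hB).1,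
      fun x hx => subset_biUnion_coneAt_directionCones hcover hx fun y => hdir hx, ?_⟩
    rintro B₁ hB₁ B₂ hB₂ v₁ hv₁ v₂ hv₂ hv₁0 hv₂0
    obtain ⟨hB₁F, x₁, hx₁, y₁, hy₁, hu₁⟩ := mem_directionCones.1 hB₁
    obtain ⟨hB₂F, x₂, hx₂, y₂, hy₂, hu₂⟩ := mem_directionCones.1 hB₂
    calc angle v₁ v₂
        ≤ angle v₁ (y₁ - x₁) + angle (y₁ - x₁) (y₂ - x₂) + angle (y₂ - x₂) v₂ :=
          (angle_le_angle_add_angle v₁ (y₂ - x₂) v₂).trans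
            (add_le_add_left (angle_le_angle_add_angle v₁ (y₁ - x₁) (y₂ - x₂)) _)
      _ ≤ α + 4 * √d / ρ₁ + α := by
          gcongr
          · exact hspan B₁ hB₁F v₁ hv₁ _ hu₁ hv₁0 (hdir hx₁ hy₁)
          · exact angle_sub_le_of_mem_box hρ hsep hD hx₁ hx₂ hy₁ hy₂
          · exact hspan B₂ hB₂F _ hu₂ v₂ hv₂ (hdir hx₂ hy₂) hv₂0
      _ ≤ 4 * √d / ρ₁ + 3 * α := by linarith
  · obtain ⟨B, hBF, -⟩ := hcover (EuclideanSpace.single ⟨0, hd⟩ 1) (by simp)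
    have hsize : max (boxSize L R) (boxSize L' R') ≤ 0 :=
      nonpos_of_mul_nonpos_right (hsep.trans (not_lt.1 hD)) hρ
    refine ⟨{B}, Finset.singleton_subset_iff.2 hBF, fun x hx y hy => ?_, ?_⟩
    · have hyx := eq_of_setDist_box_nonpos hsize (not_lt.1 hD) hx hy
      exact Set.mem_biUnion (Finset.mem_singleton_self B) (by simp [coneAt, hyx, zero_mem_cone])
    · rintro B₁ hB₁ B₂ hB₂ v₁ hv₁ v₂ hv₂ hv₁0 hv₂0
      rw [Finset.mem_singleton.1 hB₁] at hv₁
      rw [Finset.mem_singleton.1 hB₂] at hv₂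
      have := hspan B hBF v₁ hv₁ v₂ hv₂ hv₁0 hv₂0
      have : 0 ≤ 4 * √d / ρ₁ := by positivity
      linarith

/-- if each cone of the covering frame F has angular span at most α and
d(b,b') ≥ ρ₁·max(ϑ(b),ϑ(b')), there is a subcollection 𝓑 ⊆ F of cones such that for every
x ∈ b the union of the cones of 𝓑 at x contains b', and the angular span of 𝓑 is at most
4√d/ρ₁ + 3α. -/
theorem stmt17 (d : ℕ) (hd : 0 < d) (α ρ₁ : ℝ) (hα : 0 ≤ α) (hρ : 0 < ρ₁)
    (F : Finset (Fin d → Pt d))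
    (hcover : ∀ x : Pt d, x ≠ 0 → ∃ B ∈ F, x ∈ cone B)
    (hspan : ∀ B ∈ F, ∀ v₁ ∈ cone B, ∀ v₂ ∈ cone B, v₁ ≠ 0 → v₂ ≠ 0 →
      InnerProductGeometry.angle v₁ v₂ ≤ α)
    (L R L' R' : Fin d → ℝ)
    (hb : ∀ i, L i ≤ R i) (hb' : ∀ i, L' i ≤ R' i)
    (hsep : ρ₁ * max (boxSize L R) (boxSize L' R') ≤
      setDist (box L R) (box L' R')) :
    ∃ 𝓑 ⊆ F,
      (∀ x ∈ box L R, box L' R' ⊆ ⋃ B ∈ (𝓑 : Finset (Fin d → Pt d)), coneAt x B) ∧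
      (∀ B₁ ∈ 𝓑, ∀ B₂ ∈ 𝓑, ∀ v₁ ∈ cone B₁, ∀ v₂ ∈ cone B₂, v₁ ≠ 0 → v₂ ≠ 0 →
        InnerProductGeometry.angle v₁ v₂ ≤ 4 * Real.sqrt d / ρ₁ + 3 * α) :=
  stmt17_general d hd α ρ₁ hα hρ F hcover hspan L R L' R' hsep
end

section
/- Let G be a graph on vertex set V and u, v ∈ V. Suppose U = {u₁,...,u_{k+1}} and U' = {v₁,...,v_{k+1}} are sets of vertices such that there are k+1 internally vertex-disjoint paths from u to the set U (each path ending at a distinct u_i and pairwise sharing only u), k+1 internally vertex-disjoint paths from v to U' (pairwise sharing only v), the edges u_iv_i are all present in G, and all these paths and edges are internally disjoint from each other except at shared endpoints u_i, v_i. Then there are k+1 internally vertex-disjoint paths from u to v in G. -/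
namespace SimpleGraph.Walk

variable {V : Type*} {G : SimpleGraph V} {u v a b x : V}

theorem mem_support_append_cons_reverse_iff (p : G.Walk u a) (h : G.Adj a b) (q : G.Walk v b) :
    x ∈ (p.append (cons h q.reverse)).support ↔ x ∈ p.support ∨ x ∈ q.support := by
  rw [mem_support_append_iff, support_cons, List.mem_cons, support_reverse, List.mem_reverse]
  constructor
  · rintro (hp | rfl | hq)
    exacts [.inl hp, .inl p.end_mem_support, .inr hq]
  · rintro (hp | hq)
    exacts [.inl hp, .inr (.inr hq)]

theorem IsPath.append_cons_reverse {p : G.Walk u a} {q : G.Walk v b} (hp : p.IsPath)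
    (hq : q.IsPath) (hpq : ∀ x ∈ p.support, x ∉ q.support) (h : G.Adj a b) :
    (p.append (cons h q.reverse)).IsPath := by
  rw [isPath_def, support_append, support_cons, List.tail_cons, support_reverse]
  exact hp.support_nodup.append (List.nodup_reverse.mpr hq.support_nodup)
    fun x hx hx' => hpq x hx (List.mem_reverse.mp hx')

end SimpleGraph.Walk

theorem stmt19_general (V : Type) (G : SimpleGraph V) (u v : V) (k : ℕ)
    (uu vv : Fin (k + 1) → V)
    (Pu : ∀ i, G.Walk u (uu i)) (Pv : ∀ i, G.Walk v (vv i))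
    (hPu : ∀ i, (Pu i).IsPath) (hPv : ∀ i, (Pv i).IsPath)
    (hPuDisj : ∀ i j, i ≠ j → ∀ x : V,
      x ∈ (Pu i).support → x ∈ (Pu j).support → x = u)
    (hPvDisj : ∀ i j, i ≠ j → ∀ x : V,
      x ∈ (Pv i).support → x ∈ (Pv j).support → x = v)
    (hadj : ∀ i, G.Adj (uu i) (vv i))
    (hcross : ∀ i j, ∀ x : V, x ∈ (Pu i).support → x ∉ (Pv j).support) :
    ∃ P : Fin (k + 1) → G.Walk u v,
      (∀ i, (P i).IsPath) ∧
      ∀ i j, i ≠ j → ∀ x : V,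
        x ∈ (P i).support → x ∈ (P j).support → x = u ∨ x = v := by
  refine ⟨fun i => (Pu i).append (.cons (hadj i) (Pv i).reverse),
    fun i => (hPu i).append_cons_reverse (hPv i) (hcross i i) (hadj i), ?_⟩
  intro i j hij x hxi hxj
  rw [SimpleGraph.Walk.mem_support_append_cons_reverse_iff] at hxi hxj
  rcases hxi with hui | hvi <;> rcases hxj with huj | hvj
  · exact .inl (hPuDisj i j hij x hui huj)
  · exact absurd hvj (hcross i j x hui)
  · exact absurd hvi (hcross j i x huj)
  · exact .inr (hPvDisj i j hij x hvi hvj)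

/-- Menger-type gluing: given k+1 internally disjoint paths from u to
distinct vertices u₁,…,u_{k+1}, k+1 internally disjoint paths from v to distinct vertices
v₁,…,v_{k+1}, the bridging edges uᵢvᵢ all present in G, and the u-fan and v-fan disjoint,
there are k+1 internally vertex-disjoint paths from u to v in G. -/
theorem stmt19 (V : Type) (G : SimpleGraph V) (u v : V) (huv : u ≠ v) (k : ℕ)
    (uu vv : Fin (k + 1) → V)
    (huu : Function.Injective uu) (hvv : Function.Injective vv)
    (Pu : ∀ i, G.Walk u (uu i)) (Pv : ∀ i, G.Walk v (vv i))
    (hPu : ∀ i, (Pu i).IsPath) (hPv : ∀ i, (Pv i).IsPath)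
    (hPuDisj : ∀ i j, i ≠ j → ∀ x : V,
      x ∈ (Pu i).support → x ∈ (Pu j).support → x = u)
    (hPvDisj : ∀ i j, i ≠ j → ∀ x : V,
      x ∈ (Pv i).support → x ∈ (Pv j).support → x = v)
    (hadj : ∀ i, G.Adj (uu i) (vv i))
    (hcross : ∀ i j, ∀ x : V, x ∈ (Pu i).support → x ∉ (Pv j).support) :
    ∃ P : Fin (k + 1) → G.Walk u v,
      (∀ i, (P i).IsPath) ∧
      ∀ i j, i ≠ j → ∀ x : V,
        x ∈ (P i).support → x ∈ (P j).support → x = u ∨ x = v :=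
  stmt19_general V G u v k uu vv Pu Pv hPu hPv hPuDisj hPvDisj hadj hcross
end
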